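/- Let (M, d) be a metric space and let S, T, U be nonempty finite sequences in M. Then DK satisfies the triangle inequality: DK(S, U) ≤ DK(S, T) + DK(T, U). -/

import Mathlib

open scoped ENNReal

/-- The dog-keeper distance on finite sequences over a metric space; by convention `DK` of an
empty sequence is `∞`. -/
noncomputable def DK {M : Type*} [MetricSpace M] : List M → List M → ℝ≥0∞
  | [], _ => ⊤
  | _ :: _, [] => ⊤
  | [s], [t] => ENNReal.ofReal (dist s t)
  | s :: S, t :: T =>
      min (max (ENNReal.ofReal (dist s t)) (DK S T))
        (min (max (ENNReal.ofReal (dist s t)) (DK S (t :: T)))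
          (max (ENNReal.ofReal (dist s t)) (DK (s :: S) T)))
termination_by S T => S.length + T.length
decreasing_by all_goals (simp <;> omega)

section DKaux
variable {M : Type*} [MetricSpace M]

lemma DK_nil_left (T : List M) : DK ([] : List M) T = ⊤ := by rw [DK.eq_def]

lemma DK_nil_right (S : List M) : DK S [] = ⊤ := by
  cases S with
  | nil => exact DK_nil_left []
  | cons s S => cases S <;> rw [DK.eq_def]

lemma DK_single (s t : M) : DK [s] [t] = ENNReal.ofReal (dist s t) := by rw [DK.eq_def]

lemma DK_cons_cons (s t : M) (S T : List M) (h : S ≠ [] ∨ T ≠ []) :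
    DK (s::S) (t::T) = min (max (ENNReal.ofReal (dist s t)) (DK S T))
        (min (max (ENNReal.ofReal (dist s t)) (DK S (t :: T)))
          (max (ENNReal.ofReal (dist s t)) (DK (s :: S) T))) := by
  rw [DK.eq_def]
  match S, T with
  | [], [] => simp at h
  | [], t'::T' => rfl
  | s'::S', T => cases T <;> rfl

lemma min3_eq (a b c : ℝ≥0∞) :
    min a (min b c) = a ∨ min a (min b c) = b ∨ min a (min b c) = c := by
  rcases le_total a (min b c) with h | h
  · left; exact min_eq_left h
  · rcases le_total b c with h' | h'
    · right; left; rw [min_eq_right h, min_eq_left h']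
    · right; right; rw [min_eq_right h, min_eq_right h']

lemma DK_cases (s t : M) (S T : List M) :
    (S = [] ∧ T = []) ∨
    DK (s::S) (t::T) = max (ENNReal.ofReal (dist s t)) (DK S T) ∨
    DK (s::S) (t::T) = max (ENNReal.ofReal (dist s t)) (DK S (t::T)) ∨
    DK (s::S) (t::T) = max (ENNReal.ofReal (dist s t)) (DK (s::S) T) := by
  by_cases h : S = [] ∧ T = []
  · exact Or.inl h
  · right
    rw [DK_cons_cons s t S T (by tauto)]
    exact min3_eq _ _ _

lemma DK_le₁ (s t : M) (S T : List M) :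
    DK (s::S) (t::T) ≤ max (ENNReal.ofReal (dist s t)) (DK S T) := by
  by_cases h : S = [] ∧ T = []
  · obtain ⟨rfl, rfl⟩ := h; rw [DK_single]; exact le_max_left _ _
  · rw [DK_cons_cons s t S T (by tauto)]; exact min_le_left _ _

lemma DK_le₂ (s t : M) (S T : List M) :
    DK (s::S) (t::T) ≤ max (ENNReal.ofReal (dist s t)) (DK S (t::T)) := by
  by_cases h : S = [] ∧ T = []
  · obtain ⟨rfl, rfl⟩ := h; rw [DK_single]; exact le_max_left _ _
  · rw [DK_cons_cons s t S T (by tauto)]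
    exact le_trans (min_le_right _ _) (min_le_left _ _)

lemma DK_le₃ (s t : M) (S T : List M) :
    DK (s::S) (t::T) ≤ max (ENNReal.ofReal (dist s t)) (DK (s::S) T) := by
  by_cases h : S = [] ∧ T = []
  · obtain ⟨rfl, rfl⟩ := h; rw [DK_single]; exact le_max_left _ _
  · rw [DK_cons_cons s t S T (by tauto)]
    exact le_trans (min_le_right _ _) (min_le_right _ _)

lemma dist_le_DK (s t : M) (S T : List M) :
    ENNReal.ofReal (dist s t) ≤ DK (s::S) (t::T) := by
  rcases DK_cases s t S T with ⟨rfl, rfl⟩ | h | h | h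
  · rw [DK_single]
  all_goals rw [h]; exact le_max_left _ _

lemma DK_triangle_aux : ∀ (n : ℕ) (S T U : List M),
    S.length + T.length + U.length ≤ n →
    S ≠ [] → T ≠ [] → U ≠ [] → DK S U ≤ DK S T + DK T U := by
  intro n
  induction n with
  | zero =>
    rintro (_ | ⟨s, S⟩) T U hlen hS hT hU
    · exact absurd rfl hS
    · simp at hlen
  | succ n ih =>
    rintro (_ | ⟨s, S⟩) (_ | ⟨t, T⟩) (_ | ⟨u, U⟩) hlen hS hT hU
    any_goals first
      | exact absurd rfl hS | exact absurd rfl hT | exact absurd rfl hU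
    clear hS hT hU
    simp only [List.length_cons] at hlen
    set d := ENNReal.ofReal (dist s t) with hd_def
    set e := ENNReal.ofReal (dist t u) with he_def
    set f := ENNReal.ofReal (dist s u) with hf_def
    have hf : f ≤ d + e := by
      rw [hd_def, he_def, hf_def, ← ENNReal.ofReal_add dist_nonneg dist_nonneg]
      exact ENNReal.ofReal_le_ofReal (dist_triangle s t u)
    have hd : d ≤ DK (s::S) (t::T) := dist_le_DK s t S T
    have he : e ≤ DK (t::T) (u::U) := dist_le_DK t u T U
    rcases DK_cases s t S T with ⟨rfl, rfl⟩ | hA | hA | hA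
    · -- A singleton : S = [], T = []
      rw [DK_single]
      rcases DK_cases t u [] U with ⟨-, rfl⟩ | hB | hB | hB
      · rw [DK_single, DK_single]; exact hf
      · rw [hB, DK_nil_left]; simp
      · rw [hB, DK_nil_left]; simp
      · -- B3 : DK [t] (u::U) = max e (DK [t] U)
        rcases eq_or_ne U [] with rfl | hU
        · rw [hB, DK_nil_right]; simp
        · have hIH : DK [s] U ≤ DK [s] [t] + DK [t] U :=
            ih [s] [t] U (by simp only [List.length_cons, List.length_nil]; omega) (by simp) (by simp) hU
          rw [DK_single] at hIH
          refine le_trans (DK_le₃ s u [] U) ?_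
          rw [hB]
          refine max_le (le_trans hf ?_) (le_trans hIH ?_)
          · exact add_le_add_right (le_max_left _ _) _
          · exact add_le_add_right (le_max_right _ _) _
    · -- A1 : DK (s::S) (t::T) = max d (DK S T)
      rcases eq_or_ne S [] with rfl | hS
      · rw [hA, DK_nil_left]; simp
      rcases DK_cases t u T U with ⟨rfl, rfl⟩ | hB | hB | hB
      · rw [hA, DK_nil_right]; simp
      · -- B1
        rcases eq_or_ne T [] with rfl | hT
        · rw [hB, DK_nil_left]; simp
        rcases eq_or_ne U [] with rfl | hU
        · rw [hB, DK_nil_right]; simp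
        have hIH : DK S U ≤ DK S T + DK T U := ih S T U (by omega) hS hT hU
        refine le_trans (DK_le₁ s u S U) ?_
        rw [hA, hB]
        refine max_le (le_trans hf ?_) (le_trans hIH ?_)
        · exact add_le_add (le_max_left _ _) (le_max_left _ _)
        · exact add_le_add (le_max_right _ _) (le_max_right _ _)
      · -- B2 : DK (t::T)(u::U) = max e (DK T (u::U))
        rcases eq_or_ne T [] with rfl | hT
        · rw [hB, DK_nil_left]; simp
        have hIH : DK S (u::U) ≤ DK S T + DK T (u::U) :=
          ih S T (u::U) (by simp; omega) hS hT (by simp)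
        refine le_trans (DK_le₂ s u S U) ?_
        rw [hA, hB]
        refine max_le (le_trans hf ?_) (le_trans hIH ?_)
        · exact add_le_add (le_max_left _ _) (le_max_left _ _)
        · exact add_le_add (le_max_right _ _) (le_max_right _ _)
      · -- B3 : DK (t::T)(u::U) = max e (DK (t::T) U) -- uniform over A
        rcases eq_or_ne U [] with rfl | hU
        · rw [hB, DK_nil_right]; simp
        have hIH : DK (s::S) U ≤ DK (s::S) (t::T) + DK (t::T) U :=
          ih (s::S) (t::T) U (by simp; omega) (by simp) (by simp) hU
        refine le_trans (DK_le₃ s u S U) ?_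
        rw [hB]
        refine max_le (le_trans hf ?_) (le_trans hIH ?_)
        · exact add_le_add hd (le_max_left _ _)
        · exact add_le_add_right (le_max_right _ _) _
    · -- A2 : DK (s::S)(t::T) = max d (DK S (t::T)) -- uniform over B
      rcases eq_or_ne S [] with rfl | hS
      · rw [hA, DK_nil_left]; simp
      have hIH : DK S (u::U) ≤ DK S (t::T) + DK (t::T) (u::U) :=
        ih S (t::T) (u::U) (by simp; omega) hS (by simp) (by simp)
      refine le_trans (DK_le₂ s u S U) ?_
      rw [hA]
      refine max_le (le_trans hf ?_) (le_trans hIH ?_)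
      · exact add_le_add (le_max_left _ _) he
      · exact add_le_add_left (le_max_right _ _) _
    · -- A3 : DK (s::S)(t::T) = max d (DK (s::S) T)
      rcases eq_or_ne T [] with rfl | hT
      · rw [hA, DK_nil_right]; simp
      rcases DK_cases t u T U with ⟨rfl, -⟩ | hB | hB | hB
      · exact absurd rfl hT
      · -- B1 : max e (DK T U)
        rcases eq_or_ne U [] with rfl | hU
        · rw [hB, DK_nil_right]; simp
        have hIH : DK (s::S) U ≤ DK (s::S) T + DK T U :=
          ih (s::S) T U (by simp; omega) (by simp) hT hU
        refine le_trans (DK_le₃ s u S U) ?_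
        rw [hA, hB]
        refine max_le (le_trans hf ?_) (le_trans hIH ?_)
        · exact add_le_add (le_max_left _ _) (le_max_left _ _)
        · exact add_le_add (le_max_right _ _) (le_max_right _ _)
      · -- B2 : max e (DK T (u::U)) : direct IH with middle T
        have hIH : DK (s::S) (u::U) ≤ DK (s::S) T + DK T (u::U) :=
          ih (s::S) T (u::U) (by simp; omega) (by simp) hT (by simp)
        refine le_trans hIH ?_
        rw [hA, hB]
        exact add_le_add (le_max_right _ _) (le_max_right _ _)
      · -- B3 : uniform over A
        rcases eq_or_ne U [] with rfl | hU
        · rw [hB, DK_nil_right]; simp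
        have hIH : DK (s::S) U ≤ DK (s::S) (t::T) + DK (t::T) U :=
          ih (s::S) (t::T) U (by simp; omega) (by simp) (by simp) hU
        refine le_trans (DK_le₃ s u S U) ?_
        rw [hB]
        refine max_le (le_trans hf ?_) (le_trans hIH ?_)
        · exact add_le_add hd (le_max_left _ _)
        · exact add_le_add_right (le_max_right _ _) _

end DKaux

/-- the dog-keeper distance satisfies the triangle inequality (in `ℝ≥0∞`). -/
theorem statement14
    {M : Type*} [MetricSpace M] (S T U : List M)
    (hS : S ≠ []) (hT : T ≠ []) (hU : U ≠ []) :
    DK S U ≤ DK S T + DK T U := by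
  exact DK_triangle_aux (S.length + T.length + U.length) S T U le_rfl hS hT hU
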